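/- Let Q be a finite type, X : Q → ℕ, and k ∈ ℕ. For each function q⃗ : Fin k → Q and each q ∈ Q, let c_q(q⃗) denote the number of indices i ∈ Fin k with q⃗(i) = q. Then the sum over all q⃗ : Fin k → Q of the product over q ∈ Q of the descending factorial (X q)^{\underline{c_q(q⃗)}} equals the descending factorial (∑_{q ∈ Q} X q)^{\underline{k}}. -/

import Mathlib

/-!
Induction on `k`. Prepending a class `a` to a type vector `qv` multiplies its term by
`X a - c_a(qv)`, so the sum over `a` multiplies it by `∑ q, X q - k`, as the counts `c_q(qv)`
add up to `k`. That last step relies on truncated subtraction being harmless: when some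
`c_q(qv) > X q` the term `∏ q, (X q)^{\underline{c_q(qv)}}` is already `0`.
-/

open Finset

theorem Fin.sum_univ_pi_succ {α M : Type*} [Fintype α] [AddCommMonoid M] {k : ℕ}
    (f : (Fin (k + 1) → α) → M) :
    ∑ v, f v = ∑ a, ∑ v : Fin k → α, f (Fin.cons a v) := by
  rw [← (Fin.consEquiv fun _ => α).sum_comp, Fintype.sum_prod_type]
  rfl

theorem Fin.card_filter_cons_eq {α : Type*} [DecidableEq α] {k : ℕ} (a : α) (v : Fin k → α)
    (b : α) :
    #{i | (Fin.cons a v : Fin (k + 1) → α) i = b} =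
      (if a = b then 1 else 0) + #{i | v i = b} := by
  rw [Fin.card_filter_univ_succ']
  simp only [Fin.cons_zero, Fin.cons_succ]

theorem Fin.sum_card_filter_apply_eq {α : Type*} [Fintype α] [DecidableEq α] {k : ℕ}
    (v : Fin k → α) :
    ∑ b, #{i | v i = b} = k := by
  rw [← card_eq_sum_card_fiberwise fun i _ => mem_univ (v i), card_univ, Fintype.card_fin]

theorem prod_descFactorial_add_ite {ι : Type*} [DecidableEq ι] (s : Finset ι) (X c : ι → ℕ)
    {a : ι} (ha : a ∈ s) :
    ∏ q ∈ s, (X q).descFactorial ((if a = q then 1 else 0) + c q) =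
      (X a - c a) * ∏ q ∈ s, (X q).descFactorial (c q) := by
  have hterm : ∀ q, (X q).descFactorial ((if a = q then 1 else 0) + c q) =
      (if a = q then X q - c q else 1) * (X q).descFactorial (c q) := by
    intro q
    split_ifs
    · rw [add_comm, Nat.descFactorial_succ]
    · rw [zero_add, one_mul]
  simp only [hterm, prod_mul_distrib, prod_ite_eq, if_pos ha]

theorem sum_tsub_mul_prod_descFactorial {ι : Type*} (s : Finset ι) (X c : ι → ℕ) :
    (∑ q ∈ s, (X q - c q)) * ∏ q ∈ s, (X q).descFactorial (c q) =
      (∑ q ∈ s, X q - ∑ q ∈ s, c q) * ∏ q ∈ s, (X q).descFactorial (c q) := by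
  by_cases h : ∀ q ∈ s, c q ≤ X q
  · rw [sum_tsub_distrib s h]
  · push Not at h
    obtain ⟨q, hq, hlt⟩ := h
    rw [prod_eq_zero hq (Nat.descFactorial_eq_zero_iff_lt.mpr hlt), mul_zero, mul_zero]

/-- Single-state core of Proposition 2: summing over all type vectors `q⃗ : Fin k → Q`
the product over `q ∈ Q` of the descending factorials `(X q)^{\underline{c_q(q⃗)}}`,
where `c_q(q⃗)` is the number of indices mapped to `q`, gives the descending factorial
`(∑ q, X q)^{\underline{k}}`. -/
theorem sum_prod_descFactorial_count {Q : Type*} [Fintype Q] [DecidableEq Q]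
    (X : Q → ℕ) (k : ℕ) :
    ∑ qv : Fin k → Q, ∏ q : Q,
        (X q).descFactorial ((Finset.univ.filter (fun i => qv i = q)).card) =
      (∑ q : Q, X q).descFactorial k := by
  induction k with
  | zero => simp
  | succ k ih =>
    calc ∑ qv : Fin (k + 1) → Q, ∏ q, (X q).descFactorial #{i | qv i = q}
        = ∑ qv : Fin k → Q, (∑ a, (X a - #{i | qv i = a})) *
            ∏ q, (X q).descFactorial #{i | qv i = q} := by
          simp only [Fin.sum_univ_pi_succ, Fin.card_filter_cons_eq,
            prod_descFactorial_add_ite _ _ _ (mem_univ _), sum_mul]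
          exact sum_comm
      _ = ∑ qv : Fin k → Q, (∑ q, X q - k) * ∏ q, (X q).descFactorial #{i | qv i = q} := by
          simp only [sum_tsub_mul_prod_descFactorial, Fin.sum_card_filter_apply_eq]
      _ = (∑ q, X q).descFactorial (k + 1) := by
          rw [← mul_sum, ih, Nat.descFactorial_succ]
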